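/- Let x : ℝ → S^n be a 1-Lipschitz map and suppose that for some t₀ the point (x(t₀ − π), t₀ − π) equals (−x(t₀), t₀ − π), i.e., x(t₀ − π) is antipodal to x(t₀). Then for all s ∈ [t₀ − π, t₀], d(x(t₀), x(s)) = t₀ − s, and x restricted to [t₀ − π, t₀] is a unit-speed minimizing geodesic of S^n. -/

import Mathlib

/-!
The round distance is the angle between unit vectors, which satisfies the triangle
inequality. For a `1`-Lipschitz curve with `a ≤ s ≤ t ≤ b`,
`b - a = d(γ a, γ b) ≤ d(γ a, γ s) + d(γ s, γ t) + d(γ t, γ b) ≤ (s - a) + d(γ s, γ t) + (b - t)`,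
so the curve is an isometry on `[a, b]` as soon as its endpoints are at distance `b - a`.
Antipodal points are at distance `π`, which is exactly the length of `[t₀ - π, t₀]`.
-/

/-- The unit sphere `Sⁿ` in `ℝ^{n+1}`. -/
abbrev Sph (n : ℕ) := Metric.sphere (0 : EuclideanSpace ℝ (Fin (n+1))) 1

/-- The round (geodesic) distance on the unit sphere: `arccos ⟪x, y⟫`. -/
noncomputable def sphereDist {n : ℕ} (x y : Sph n) : ℝ :=
  Real.arccos ((inner ℝ (x : EuclideanSpace ℝ (Fin (n+1))) (y : EuclideanSpace ℝ (Fin (n+1)))) : ℝ)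

/-- The causal relation of the universal cover of Einstein space-time `Sⁿ × ℝ`. -/
noncomputable def causalLe {n : ℕ} (p q : Sph n × ℝ) : Prop :=
  sphereDist p.1 q.1 ≤ q.2 - p.2

/-- The chronological relation of the universal cover of Einstein space-time. -/
noncomputable def chronLt {n : ℕ} (p q : Sph n × ℝ) : Prop :=
  sphereDist p.1 q.1 < q.2 - p.2

open Set InnerProductGeometry

theorem angle_eq_abs_sub_of_angle_eq_sub {V : Type*} [NormedAddCommGroup V]
    [InnerProductSpace ℝ V] {γ : ℝ → V} (hγ : ∀ s t, angle (γ s) (γ t) ≤ |s - t|)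
    {a b : ℝ} (hab : angle (γ a) (γ b) = b - a) {s t : ℝ} (hs : s ∈ Icc a b)
    (ht : t ∈ Icc a b) : angle (γ s) (γ t) = |s - t| := by
  wlog hst : s ≤ t generalizing s t
  · rw [angle_comm, abs_sub_comm]
    exact this ht hs (le_of_not_ge hst)
  have hγ' {u v : ℝ} (huv : u ≤ v) : angle (γ u) (γ v) ≤ v - u := by
    simpa only [abs_sub_comm u v, abs_of_nonneg (sub_nonneg.2 huv)] using hγ u v
  rw [abs_sub_comm, abs_of_nonneg (sub_nonneg.2 hst)]
  refine le_antisymm (hγ' hst) ?_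
  linarith [hγ' hs.1, hγ' ht.2, angle_le_angle_add_angle (γ a) (γ s) (γ b),
    angle_le_angle_add_angle (γ s) (γ t) (γ b)]

theorem sphereDist_eq_angle {n : ℕ} (x y : Sph n) :
    sphereDist x y = angle (x : EuclideanSpace ℝ (Fin (n + 1))) y := by
  simp [sphereDist, InnerProductGeometry.angle]

/-- Rigidity: any past causal curve of `Ẽin` joining a point to its conjugate point is a
lightlike geodesic. If `x : ℝ → Sⁿ` is `1`-Lipschitz and `x (t₀ − π)` is antipodal to
`x t₀`, then on `[t₀ − π, t₀]` the map `x` is a unit-speed minimizing geodesic and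
`d(x t₀, x s) = t₀ − s`. -/
theorem stmt17 (n : ℕ) (x : ℝ → Sph n)
    (hLip : ∀ s t : ℝ, sphereDist (x s) (x t) ≤ |s - t|)
    (t₀ : ℝ) (hconj : x (t₀ - Real.pi) = -(x t₀)) :
    (∀ s ∈ Set.Icc (t₀ - Real.pi) t₀, sphereDist (x t₀) (x s) = t₀ - s) ∧
    (∀ s ∈ Set.Icc (t₀ - Real.pi) t₀, ∀ t ∈ Set.Icc (t₀ - Real.pi) t₀,
      sphereDist (x s) (x t) = |s - t|) := by
  simp only [sphereDist_eq_angle] at hLip ⊢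
  have hx₀ : (x t₀ : EuclideanSpace ℝ (Fin (n + 1))) ≠ 0 :=
    ne_zero_of_mem_unit_sphere (x t₀)
  have hends : angle (x (t₀ - Real.pi) : EuclideanSpace ℝ (Fin (n + 1))) (x t₀) =
      t₀ - (t₀ - Real.pi) := by
    rw [hconj, coe_neg_sphere, angle_neg_self_of_nonzero hx₀, sub_sub_cancel]
  have hisom := fun s (hs : s ∈ Icc (t₀ - Real.pi) t₀) t (ht : t ∈ Icc (t₀ - Real.pi) t₀) =>
    angle_eq_abs_sub_of_angle_eq_sub hLip hends hs ht
  refine ⟨fun s hs => ?_, hisom⟩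
  rw [hisom t₀ (right_mem_Icc.2 (by linarith [Real.pi_pos])) s hs,
    abs_of_nonneg (sub_nonneg.2 hs.2)]
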